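/- Let X be a set and B(X) the group of finite subsets of X under symmetric difference. If w₁, w₂, w₃, w₄ ∈ B(X) satisfy |wᵢ Δ wⱼ| = 2 for all i < j ≤ 4, then either (a) there exist x₁, x₂, x₃, x₄ ∈ X with wᵢ Δ wⱼ = {xᵢ, xⱼ} for all i < j, or (b) w₄ = w₁ Δ w₂ Δ w₃ and there exist x₁, x₂, x₃ ∈ X with w₁ Δ w₄ = w₂ Δ w₃ = {x₂, x₃}, w₂ Δ w₄ = w₁ Δ w₃ = {x₁, x₃}, and w₃ Δ w₄ = w₁ Δ w₂ = {x₁, x₂}. -/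

import Mathlib

/-!
Translating by `w 0` is an isometry of `B(X)`, so we may look at the sets `vᵢ = w 0 ∆ w i`:
`v₁, v₂, v₃` have two elements each and pairwise symmetric differences of size two, i.e. they
are three edges of a graph on `X` that pairwise share exactly one vertex, because
`|A ∆ B| = |A| + |B| - 2|A ∩ B|`. Such edges form either a star, giving (a) with `x₀` its
centre, or a triangle, giving (b).
-/

open scoped symmDiff
open Finset

namespace Finset

variable {X : Type*} [DecidableEq X]

theorem card_symmDiff_add_two_mul_card_inter (s t : Finset X) :
    #(s ∆ t) + 2 * #(s ∩ t) = #s + #t := by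
  rw [symmDiff_eq_sup_sdiff_inf, ← card_union_add_card_inter]
  have := card_sdiff_add_card_eq_card (inter_subset_left.trans subset_union_left : s ∩ t ⊆ s ∪ t)
  simp only [sup_eq_union, inf_eq_inter]
  omega

theorem card_inter_eq_one_of_card_symmDiff_eq_two {s t : Finset X} (hs : #s = 2) (ht : #t = 2)
    (hst : #(s ∆ t) = 2) : #(s ∩ t) = 1 := by
  have := card_symmDiff_add_two_mul_card_inter s t
  omega

theorem exists_eq_pair_of_card_eq_two_of_mem {s : Finset X} {x : X} (hs : #s = 2) (hx : x ∈ s) :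
    ∃ y, x ≠ y ∧ s = {x, y} := by
  obtain ⟨y, hy⟩ := card_eq_one.mp (by rw [card_erase_of_mem hx, hs] : #(s.erase x) = 1)
  refine ⟨y, fun h => ?_, by rw [← hy, insert_erase hx]⟩
  simpa [h] using hy.symm.subset (mem_singleton_self y)

theorem pair_symmDiff_pair {p a b : X} (hpa : p ≠ a) (hpb : p ≠ b) (hab : a ≠ b) :
    ({p, a} : Finset X) ∆ {p, b} = {a, b} := by
  ext z
  simp only [mem_symmDiff, mem_insert, mem_singleton]
  grind

theorem exists_eq_pair_pair_of_card_symmDiff_eq_two {s t : Finset X} (hs : #s = 2) (ht : #t = 2)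
    (hst : #(s ∆ t) = 2) :
    ∃ p a b, p ≠ a ∧ p ≠ b ∧ a ≠ b ∧ s = {p, a} ∧ t = {p, b} := by
  obtain ⟨p, hp⟩ := card_eq_one.mp (card_inter_eq_one_of_card_symmDiff_eq_two hs ht hst)
  have hpst : p ∈ s ∩ t := hp ▸ mem_singleton_self p
  obtain ⟨a, hpa, rfl⟩ := exists_eq_pair_of_card_eq_two_of_mem hs (mem_inter.mp hpst).1
  obtain ⟨b, hpb, rfl⟩ := exists_eq_pair_of_card_eq_two_of_mem ht (mem_inter.mp hpst).2
  refine ⟨p, a, b, hpa, hpb, fun hab => ?_, rfl, rfl⟩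
  simp [hab] at hst

theorem eq_pair_or_eq_pair_of_card_symmDiff_pair_eq_two {p a b : X} {u : Finset X}
    (hpa : p ≠ a) (hpb : p ≠ b) (hab : a ≠ b) (hu : #u = 2)
    (hau : #({p, a} ∆ u) = 2) (hbu : #({p, b} ∆ u) = 2) :
    (∃ c, p ≠ c ∧ a ≠ c ∧ b ≠ c ∧ u = {p, c}) ∨ u = {a, b} := by
  by_cases hp : p ∈ u
  · obtain ⟨c, hpc, rfl⟩ := exists_eq_pair_of_card_eq_two_of_mem hu hp
    refine .inl ⟨c, hpc, fun hac => ?_, fun hbc => ?_, rfl⟩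
    · simp [hac] at hau
    · simp [hbc] at hbu
  · have mem_of_pair {x : X} (hpx : p ≠ x) (hx : #({p, x} ∆ u) = 2) : x ∈ u := by
      obtain ⟨y, hy⟩ := card_pos.mp (by
        rw [card_inter_eq_one_of_card_symmDiff_eq_two (card_pair hpx) hu hx]; exact one_pos)
      simp only [mem_inter, mem_insert, mem_singleton] at hy
      obtain ⟨rfl | rfl, hyu⟩ := hy
      · exact absurd hyu hp
      · exact hyu
    refine .inr (eq_of_subset_of_card_le ?_ (by rw [hu, card_pair hab])).symm
    exact insert_subset (mem_of_pair hpa hau) (singleton_subset_iff.mpr (mem_of_pair hpb hbu))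

end Finset

theorem stmt18 {X : Type*} [DecidableEq X] (w : Fin 4 → Finset X)
    (h : ∀ i j : Fin 4, i < j → (w i ∆ w j).card = 2) :
    (∃ x : Fin 4 → X, ∀ i j : Fin 4, i < j → w i ∆ w j = {x i, x j}) ∨
    (w 3 = w 0 ∆ w 1 ∆ w 2 ∧
      ∃ x₁ x₂ x₃ : X,
        w 0 ∆ w 3 = w 1 ∆ w 2 ∧ w 1 ∆ w 2 = ({x₂, x₃} : Finset X) ∧
        w 1 ∆ w 3 = w 0 ∆ w 2 ∧ w 0 ∆ w 2 = ({x₁, x₃} : Finset X) ∧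
        w 2 ∆ w 3 = w 0 ∆ w 1 ∧ w 0 ∆ w 1 = ({x₁, x₂} : Finset X)) := by
  have hw (i j : Fin 4) : w i ∆ w j = (w 0 ∆ w i) ∆ (w 0 ∆ w j) := by
    rw [symmDiff_symmDiff_symmDiff_comm, symmDiff_self, bot_symmDiff]
  have hc (i j : Fin 4) (hij : i < j) : #((w 0 ∆ w i) ∆ (w 0 ∆ w j)) = 2 := hw i j ▸ h i j hij
  obtain ⟨p, a, b, hpa, hpb, hab, h1, h2⟩ :=
    exists_eq_pair_pair_of_card_symmDiff_eq_two (h 0 1 (by decide)) (h 0 2 (by decide))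
      (hc 1 2 (by decide))
  rcases eq_pair_or_eq_pair_of_card_symmDiff_pair_eq_two hpa hpb hab (h 0 3 (by decide))
    (h1 ▸ hc 1 3 (by decide)) (h2 ▸ hc 2 3 (by decide)) with ⟨c, hpc, hac, hbc, h3⟩ | h3
  · refine .inl ⟨![p, a, b, c], fun i j hij => ?_⟩
    rw [hw]
    fin_cases i <;> fin_cases j <;>
      simp [h1, h2, h3, pair_symmDiff_pair, hpa, hpb, hpc, hab, hac, hbc] at hij ⊢
  · have h12 : w 1 ∆ w 2 = {a, b} := by rw [hw, h1, h2, pair_symmDiff_pair hpa hpb hab]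
    have h13 : w 1 ∆ w 3 = {p, b} := by
      rw [hw, h1, h3, pair_comm p a, pair_symmDiff_pair hpa.symm hab hpb]
    have h23 : w 2 ∆ w 3 = {p, a} := by
      rw [hw, h2, h3, pair_comm p b, pair_comm a b, pair_symmDiff_pair hpb.symm hab.symm hpa]
    refine .inr ⟨symmDiff_right_injective (w 0) ?_, p, a, b,
      h3.trans h12.symm, h12, h13.trans h2.symm, h2, h23.trans h1.symm, h1⟩
    show w 0 ∆ w 3 = w 0 ∆ (w 0 ∆ w 1 ∆ w 2)
    rw [h3, ← h12, symmDiff_assoc, symmDiff_symmDiff_cancel_left]
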